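/- arXiv:2604.09192 — 4 statements merged into one kernel-verified Lean document; each statement's English description precedes it below -/
import Mathlib

section
/- Let f₁, g₁ ∈ 𝓕_m and f₂, g₂ ∈ 𝓕_n with f₁ ≤ g₁ and f₂ ≤ g₂ pointwise. Then f₁⊗f₂ = (f₁◁g₂) ∧ (f₂◁g₁), where f₁◁g₂ and f₂◁g₁ are causal products in 𝓕_{m+n} with the functions indexed by 1 acting on the first m bits and the functions indexed by 2 acting on the last n bits. -/
open Classical

namespace HOT

/-- Binary strings of length `n`, identified with `{0,1}^n`. -/
abbrev Str (n : ℕ) := Fin n → Bool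

/-- The all-zeros string `θ`. -/
def theta (n : ℕ) : Str n := fun _ => false

/-- `𝓕_n`: boolean functions on `{0,1}^n` with `f(θ) = 1`. -/
def Fcal (n : ℕ) : Set (Str n → Bool) := {f | f (theta n) = true}

/-- The complement `f* = 1 - f + p_n`. -/
noncomputable def star {n : ℕ} (f : Str n → Bool) : Str n → Bool :=
  fun s => if s = theta n then true else !(f s)

/-- First block `s¹` of a string `s ∈ {0,1}^{m+n}`. -/
def fstStr {m n : ℕ} (s : Str (m + n)) : Str m := fun i => s (Fin.castAdd n i)

/-- Second block `s²` of a string `s ∈ {0,1}^{m+n}`. -/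
def sndStr {m n : ℕ} (s : Str (m + n)) : Str n := fun j => s (Fin.natAdd m j)

/-- Tensor product `(f ⊗ g)(s) = f(s¹) · g(s²)`. -/
noncomputable def tensor {m n : ℕ} (f : Str m → Bool) (g : Str n → Bool) :
    Str (m + n) → Bool :=
  fun s => f (fstStr s) && g (sndStr s)

/-- `f ⅋ g := (f* ⊗ g*)*`. -/
noncomputable def parr {m n : ℕ} (f : Str m → Bool) (g : Str n → Bool) :
    Str (m + n) → Bool :=
  star (tensor (star f) (star g))

/-- The causal product `f ◁ g` (`f` on the first `m` bits, `g` on the last `n` bits):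
`(f ◁ g)(s) = f(s¹)` if `s¹ ≠ θ_m`, else `g(s²)`. -/
noncomputable def causalL {m n : ℕ} (f : Str m → Bool) (g : Str n → Bool) :
    Str (m + n) → Bool :=
  fun s => if fstStr s = theta m then g (sndStr s) else f (fstStr s)

/-- The causal product `g ◁ f` (`f` on the first `m` bits, `g` on the last `n` bits):
`(g ◁ f)(s) = g(s²)` if `s² ≠ θ_n`, else `f(s¹)`. -/
noncomputable def causalR {m n : ℕ} (f : Str m → Bool) (g : Str n → Bool) :
    Str (m + n) → Bool :=
  fun s => if sndStr s = theta n then f (fstStr s) else g (sndStr s)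

/-- `p_T(s) = 1` iff `s_i = 0` for all `i ∈ T`. -/
noncomputable def pSet {n : ℕ} (T : Set (Fin n)) : Str n → Bool :=
  fun s => decide (∀ i ∈ T, s i = false)

/-- The string `e^i` with `1` exactly in position `i`. -/
def eStr {n : ℕ} (i : Fin n) : Str n := fun j => decide (j = i)

/-- The string `e^{i,j}` with `1` exactly in positions `i` and `j`. -/
def e2Str {n : ℕ} (i j : Fin n) : Str n := fun l => decide (l = i ∨ l = j)

/-- Input indices `I_f = {i : f(e^i) = 0}`. -/
def Iset {n : ℕ} (f : Str n → Bool) : Set (Fin n) := {i | f (eStr i) = false}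

/-- Output indices `O_f = {j : f(e^j) = 1}`. -/
def Oset {n : ℕ} (f : Str n → Bool) : Set (Fin n) := {j | f (eStr j) = true}

/-- `f` is a subtype if `p_{I_f} ≤ f ≤ (p_{O_f})*` pointwise. -/
def IsSubtype {n : ℕ} (f : Str n → Bool) : Prop :=
  pSet (Iset f) ≤ f ∧ f ≤ star (pSet (Oset f))

/-- The partial order `≤_O`: `s ≤_O t` iff `s_i ≤ t_i` for `i ∈ O` and `s_i ≥ t_i` for
`i ∉ O`. -/
def leO {n : ℕ} (O : Set (Fin n)) (s t : Str n) : Prop :=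
  ∀ i, (i ∈ O → s i ≤ t i) ∧ (i ∉ O → t i ≤ s i)

/-- `f` is monotone (with respect to `≤_{O_f}`). -/
def MonotoneF {n : ℕ} (f : Str n → Bool) : Prop :=
  ∀ s t, leO (Oset f) s t → f s ≤ f t

/-- The action of a permutation on strings: `σ(s)_i = s_{σ⁻¹(i)}`. -/
def permAct {n : ℕ} (σ : Equiv.Perm (Fin n)) (s : Str n) : Str n := fun i => s (σ⁻¹ i)

/-- `(f ∘ σ)(s) = f(σ(s))`. -/
def permComp {n : ℕ} (f : Str n → Bool) (σ : Equiv.Perm (Fin n)) : Str n → Bool :=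
  fun s => f (permAct σ s)

/-- The inductively defined family `𝓣_n` of type functions. -/
inductive IsType : (n : ℕ) → (Str n → Bool) → Prop
  | one : IsType 1 (fun _ => true)
  | dual {n : ℕ} {f : Str n → Bool} : IsType n f → IsType n (star f)
  | perm {n : ℕ} {f : Str n → Bool} (σ : Equiv.Perm (Fin n)) :
      IsType n f → IsType n (permComp f σ)
  | tens {m n : ℕ} {f : Str m → Bool} {g : Str n → Bool} :
      IsType m f → IsType n g → IsType (m + n) (tensor f g)

/-- Interpretation of a bit as an integer. -/
def toZ (b : Bool) : ℤ := (b.toNat : ℤ)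

/-- `f` is a chain type: `f = Σ_{i=0}^N (-1)^i p_{S_i}` for a strictly increasing chain
`S_0 ⊊ ⋯ ⊊ S_N ⊆ [n]` with `N` even. -/
def IsChainType {n : ℕ} (f : Str n → Bool) : Prop :=
  ∃ N : ℕ, Even N ∧ ∃ S : Fin (N + 1) → Set (Fin n), StrictMono S ∧
    ∀ s : Str n, toZ (f s) = ∑ i : Fin (N + 1), (-1 : ℤ) ^ (i : ℕ) * toZ (pSet (S i) s)

/-- The Möbius transform `f̂_T`. -/
noncomputable def mobius {n : ℕ} (f : Str n → Bool) (T : Set (Fin n)) : ℤ :=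
  ∑ s : Str n, if ∀ j, j ∉ T → s j = true then
    (-1 : ℤ) ^ (∑ j : Fin n, if j ∈ T then (s j).toNat else 0) * toZ (f s)
  else 0

/-- The structure poset `𝓟_f = {T ⊆ [n] : f̂_T ≠ 0}`, ordered by inclusion. -/
noncomputable def structPoset {n : ℕ} (f : Str n → Bool) : Set (Set (Fin n)) :=
  {T | mobius f T ≠ 0}

/-- The label set `L_T = T ∖ ⋃ {S ∈ 𝓟_f : S ⊊ T}`. -/
noncomputable def labels {n : ℕ} (f : Str n → Bool) (T : Set (Fin n)) : Set (Fin n) :=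
  T \ ⋃₀ {S | S ∈ structPoset f ∧ S ⊂ T}

/-- The reduced structure poset `𝓟_f^0`: `∅` (if `∅ ∈ 𝓟_f`) together with all
`T ∈ 𝓟_f` with `L_T ≠ ∅`. -/
noncomputable def reducedPoset {n : ℕ} (f : Str n → Bool) : Set (Set (Fin n)) :=
  {T | T ∈ structPoset f ∧ (T = ∅ ∨ labels f T ≠ ∅)}

/-- The rank `ρ_f(T)`: the length of a longest chain in `𝓟_f` with top element `T`
(this is the length of any maximal such chain in the graded poset `𝓟_f`). -/
noncomputable def rank {n : ℕ} (f : Str n → Bool) (T : Set (Fin n)) : ℕ :=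
  sSup {k | ∃ c : Fin (k + 1) → Set (Fin n), StrictMono c ∧
    (∀ i, c i ∈ structPoset f) ∧ c (Fin.last k) = T}

/-- The rank `r(f)` of the whole poset `𝓟_f`: the common length of its maximal chains. -/
noncomputable def rk {n : ℕ} (f : Str n → Bool) : ℕ :=
  sSup {k | ∃ c : Fin (k + 1) → Set (Fin n), StrictMono c ∧ ∀ i, c i ∈ structPoset f}

/-- `𝕋_i^f = {T ∈ 𝓟_f : i ∈ L_T}`. -/
noncomputable def Tset {n : ℕ} (f : Str n → Bool) (i : Fin n) : Set (Set (Fin n)) :=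
  {T | T ∈ structPoset f ∧ i ∈ labels f T}

/-- The rank `r_f(i)` of an index: the common rank of elements of `𝕋_i^f`, or `r(f)+1`
if `𝕋_i^f = ∅` (a free output). -/
noncomputable def idxRank {n : ℕ} (f : Str n → Bool) (i : Fin n) : ℕ :=
  if (Tset f i).Nonempty then sSup (rank f '' Tset f i) else rk f + 1

/-- `X` is the greatest lower bound of `S` and `T` in the poset `(P, ⊆)`. -/
def IsGLBIn {n : ℕ} (P : Set (Set (Fin n))) (S T X : Set (Fin n)) : Prop :=
  X ∈ P ∧ X ⊆ S ∧ X ⊆ T ∧ ∀ Y ∈ P, Y ⊆ S → Y ⊆ T → Y ⊆ X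

/-- `X` is the least upper bound of `S` and `T` in the poset `(P, ⊆)`. -/
def IsLUBIn {n : ℕ} (P : Set (Set (Fin n))) (S T X : Set (Fin n)) : Prop :=
  X ∈ P ∧ S ⊆ X ∧ T ⊆ X ∧ ∀ Y ∈ P, S ⊆ Y → T ⊆ Y → X ⊆ Y

/-- `S^↓`: the downset generated by `S` in `𝓟_f^0`. -/
noncomputable def downSet {n : ℕ} (f : Str n → Bool) (S : Set (Fin n)) :
    Set (Set (Fin n)) :=
  {X | X ∈ reducedPoset f ∧ X ⊆ S}

/-- `S^↑`: the upset generated by `S` in `𝓟_f^0`. -/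
noncomputable def upSet {n : ℕ} (f : Str n → Bool) (S : Set (Fin n)) :
    Set (Set (Fin n)) :=
  {X | X ∈ reducedPoset f ∧ S ⊆ X}

/-- The pair rank `r_f(i,j)`: `max{ρ_f(S ∧ T) : S ∈ 𝕋_i^f, T ∈ 𝕋_j^f, S ∧ T exists in 𝓟_f}`;
`-1` if this set is empty, unless `i` or `j` is a free output, in which case it is
`min{r_f(i), r_f(j)}`. -/
noncomputable def pairRank {n : ℕ} (f : Str n → Bool) (i j : Fin n) : ℤ :=
  if _h : ∃ r : ℤ, ∃ S ∈ Tset f i, ∃ T ∈ Tset f j, ∃ X, IsGLBIn (structPoset f) S T X ∧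
      r = (rank f X : ℤ) then
    sSup {r : ℤ | ∃ S ∈ Tset f i, ∃ T ∈ Tset f j, ∃ X, IsGLBIn (structPoset f) S T X ∧
      r = (rank f X : ℤ)}
  else if Tset f i = ∅ ∨ Tset f j = ∅ then
    min (idxRank f i : ℤ) (idxRank f j : ℤ)
  else -1

/-- Membership in the sublattice generated by a set `S`. -/
inductive InLatGen {α : Type*} [Lattice α] (S : Set α) : α → Prop
  | base {a : α} : a ∈ S → InLatGen S a
  | sup {a b : α} : InLatGen S a → InLatGen S b → InLatGen S (a ⊔ b)
  | inf {a b : α} : InLatGen S a → InLatGen S b → InLatGen S (a ⊓ b)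

/-- For `s ≰_O θ`, `f_s` is the function with support `U_s ∪ U_θ` (w.r.t. `≤_O`). -/
noncomputable def fStr {n : ℕ} (O : Set (Fin n)) (s : Str n) : Str n → Bool :=
  fun t => decide (leO O s t ∨ leO O (theta n) t)

/-- A string `s ∉ D_θ ∪ U_θ` is basic (for `≤_O`) if `s_j = 1` for exactly one `j ∈ O`
and `s_i = 0` for at most one `i ∈ I = Oᶜ`. -/
def IsBasic {n : ℕ} (O : Set (Fin n)) (s : Str n) : Prop :=
  ¬ leO O s (theta n) ∧ ¬ leO O (theta n) s ∧
  (∃! j, j ∈ O ∧ s j = true) ∧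
  (∀ i i', i ∈ Oᶜ → i' ∈ Oᶜ → s i = false → s i' = false → i = i')

/-- if `f₁ ≤ g₁` and `f₂ ≤ g₂` then `f₁⊗f₂ = (f₁◁g₂) ∧ (f₂◁g₁)` (functions
indexed by 1 act on the first `m` bits, those indexed by 2 on the last `n` bits). -/
theorem stmt5 {m n : ℕ} (f₁ g₁ : Str m → Bool) (f₂ g₂ : Str n → Bool)
    (hf₁ : f₁ ∈ Fcal m) (hg₁ : g₁ ∈ Fcal m) (hf₂ : f₂ ∈ Fcal n) (hg₂ : g₂ ∈ Fcal n)
    (h₁ : f₁ ≤ g₁) (h₂ : f₂ ≤ g₂) :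
    tensor f₁ f₂ = causalL f₁ g₂ ⊓ causalR g₁ f₂ := by
  funext s
  have hPi : (causalL f₁ g₂ ⊓ causalR g₁ f₂) s = (causalL f₁ g₂ s ⊓ causalR g₁ f₂ s) := rfl
  have hinf : ∀ a b : Bool, a ⊓ b = (a && b) := by decide
  rw [hPi, hinf]
  simp only [tensor, causalL, causalR]
  by_cases h1 : fstStr s = theta m <;> by_cases h2 : sndStr s = theta n <;>
      simp only [h1, h2, if_pos, if_neg, if_true, if_false]
  · rw [hf₁, hf₂, hg₁, hg₂]
  · rw [hf₁]
    have := h₂ (sndStr s)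
    cases hx : f₂ (sndStr s) <;> simp_all <;> exact eq_top_iff.mpr this
  · rw [hf₂]
    have := h₁ (fstStr s)
    cases hx : f₁ (fstStr s) <;> simp_all <;> exact eq_top_iff.mpr this

end HOT
end

section
/- Let f ∈ 𝓕_m and g ∈ 𝓕_n be subtypes and σ a permutation of [m]. Then: (i) f* is a subtype with I_{f*} = O_f and O_{f*} = I_f; (ii) f∘σ is a subtype with I_{f∘σ} = σ⁻¹(I_f) and O_{f∘σ} = σ⁻¹(O_f); (iii) f⊗g, f⅋g, f◁g and g◁f are subtypes in 𝓕_{m+n}, each with input set I_f ∪ {m + i : i ∈ I_g} and output set O_f ∪ {m + j : j ∈ O_g}. -/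
/-!
A subtype is an `f` squeezed as `p_{I_f} ≤ f ≤ (p_{O_f})*`. Complementation is an
order-reversing involution of `𝓕_n` (on functions with value `1` at `θ`), so it swaps the two
bounds, and relabelling by `σ` commutes with `≤`, `*` and `p_T`. For the products,
`p_{I ⊎ J} = p_I ⊗ p_J`, both `⊗` and `⅋` are monotone, and `(p_I)* ⅋ (p_J)* = (p_I ⊗ p_J)*`;
hence anything between `f ⊗ g` and `f ⅋ g` is squeezed between `p_{I_f ⊎ I_g}` and
`(p_{O_f ⊎ O_g})*`. All four products lie in that interval, and since `f ⊗ g` and `f ⅋ g`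
agree on the unit strings `e^k`, so does everything in between, which gives the input and
output sets.
-/

open Classical

namespace HOT

section Complement

variable {n : ℕ}

lemma pSet_theta (T : Set (Fin n)) : pSet T (theta n) = true := by
  simp [pSet, theta]

lemma eStr_ne_theta (i : Fin n) : eStr i ≠ theta n := fun h => by
  simpa [eStr, theta] using congrFun h i

lemma star_antitone {f g : Str n → Bool} (h : f ≤ g) : star g ≤ star f := by
  intro s
  by_cases hs : s = theta n
  · simp [star, hs]
  · simpa [star, hs] using compl_le_compl (h s)

lemma star_star {f : Str n → Bool} (hf : f (theta n) = true) : star (star f) = f := by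
  funext s
  by_cases hs : s = theta n
  · simp [star, hs, hf]
  · simp [star, hs]

lemma Iset_star (f : Str n → Bool) : Iset (star f) = Oset f := by
  ext i; simp [Iset, Oset, star, eStr_ne_theta]

lemma Oset_star (f : Str n → Bool) : Oset (star f) = Iset f := by
  ext i; simp [Iset, Oset, star, eStr_ne_theta]

theorem IsSubtype.star {f : Str n → Bool} (hf : IsSubtype f) : IsSubtype (star f) := by
  rw [IsSubtype, Iset_star, Oset_star]
  exact ⟨star_star (pSet_theta _) ▸ star_antitone hf.2, star_antitone hf.1⟩

end Complement

section Permutation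

variable {n : ℕ} (σ : Equiv.Perm (Fin n))

lemma permAct_eStr (i : Fin n) : permAct σ (eStr i) = eStr (σ i) := by
  funext j
  simp [permAct, eStr, Equiv.symm_apply_eq]

lemma permAct_eq_theta_iff {s : Str n} : permAct σ s = theta n ↔ s = theta n := by
  simp only [funext_iff, permAct, theta]
  exact ⟨fun h i => by simpa using h (σ i), fun h i => h _⟩

lemma Iset_permComp (f : Str n → Bool) : Iset (permComp f σ) = σ ⁻¹' Iset f := by
  ext i; simp [Iset, permComp, permAct_eStr]

lemma Oset_permComp (f : Str n → Bool) : Oset (permComp f σ) = σ ⁻¹' Oset f := by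
  ext i; simp [Oset, permComp, permAct_eStr]

lemma permComp_pSet (T : Set (Fin n)) : permComp (pSet T) σ = pSet (σ ⁻¹' T) := by
  funext s
  simp only [permComp, pSet, permAct, Set.mem_preimage]
  congr 1
  exact propext ⟨fun h j hj => by simpa using h (σ j) hj, fun h i hi => h _ (by simpa using hi)⟩

lemma permComp_star (f : Str n → Bool) : permComp (star f) σ = star (permComp f σ) := by
  funext
  simp only [permComp, star, permAct_eq_theta_iff]

lemma permComp_mono {f g : Str n → Bool} (h : f ≤ g) : permComp f σ ≤ permComp g σ :=
  fun _ => h _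

theorem IsSubtype.permComp {f : Str n → Bool} (hf : IsSubtype f) :
    IsSubtype (permComp f σ) := by
  rw [IsSubtype, Iset_permComp, Oset_permComp, ← permComp_pSet, ← permComp_pSet,
    ← permComp_star]
  exact ⟨permComp_mono σ hf.1, permComp_mono σ hf.2⟩

end Permutation

section Products

variable {m n : ℕ}

lemma eq_theta_iff (s : Str (m + n)) :
    s = theta (m + n) ↔ fstStr s = theta m ∧ sndStr s = theta n := by
  simp only [funext_iff, fstStr, sndStr, theta, Fin.forall_fin_add]

lemma fstStr_eStr_castAdd (i : Fin m) : fstStr (eStr (Fin.castAdd n i)) = eStr i := by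
  funext j; simp [fstStr, eStr]

lemma sndStr_eStr_castAdd (i : Fin m) : sndStr (eStr (Fin.castAdd n i)) = theta n := by
  funext j
  simp only [sndStr, eStr, Fin.ext_iff, Fin.val_natAdd, Fin.val_castAdd, theta,
    decide_eq_false_iff_not]
  omega

lemma fstStr_eStr_natAdd (j : Fin n) : fstStr (eStr (Fin.natAdd m j)) = theta m := by
  funext i
  simp only [fstStr, eStr, Fin.ext_iff, Fin.val_castAdd, Fin.val_natAdd, theta,
    decide_eq_false_iff_not]
  omega

lemma sndStr_eStr_natAdd (j : Fin n) : sndStr (eStr (Fin.natAdd m j)) = eStr j := by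
  funext i; simp [sndStr, eStr]

lemma pSet_castAdd_union_natAdd (A : Set (Fin m)) (B : Set (Fin n)) :
    pSet (Fin.castAdd n '' A ∪ Fin.natAdd m '' B) = tensor (pSet A) (pSet B) := by
  funext s
  rw [Bool.eq_iff_iff]
  simp only [pSet, tensor, fstStr, sndStr, Bool.and_eq_true, decide_eq_true_iff,
    Set.mem_union, or_imp, forall_and, Set.forall_mem_image]
  exact (and_congr decide_eq_true_iff decide_eq_true_iff).symm

lemma tensor_mono {f f' : Str m → Bool} {g g' : Str n → Bool} (hf : f ≤ f') (hg : g ≤ g') :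
    tensor f g ≤ tensor f' g' :=
  fun _ => Bool.le_and ((Bool.and_le_left _ _).trans (hf _))
    ((Bool.and_le_right _ _).trans (hg _))

lemma parr_mono {f f' : Str m → Bool} {g g' : Str n → Bool} (hf : f ≤ f') (hg : g ≤ g') :
    parr f g ≤ parr f' g' :=
  star_antitone (tensor_mono (star_antitone hf) (star_antitone hg))

variable {f : Str m → Bool} {g : Str n → Bool}

lemma le_parr_of_fstStr_ne_theta {s : Str (m + n)} (hs : fstStr s ≠ theta m) :
    f (fstStr s) ≤ parr f g s := by
  have hs' : s ≠ theta (m + n) := fun h => hs ((eq_theta_iff s).1 h).1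
  simpa [parr, star, tensor, hs, hs'] using Bool.left_le_or _ _

lemma le_parr_of_sndStr_ne_theta {s : Str (m + n)} (hs : sndStr s ≠ theta n) :
    g (sndStr s) ≤ parr f g s := by
  have hs' : s ≠ theta (m + n) := fun h => hs ((eq_theta_iff s).1 h).2
  simpa [parr, star, tensor, hs, hs'] using Bool.right_le_or _ _

lemma tensor_le_causalL : tensor f g ≤ causalL f g := by
  intro s
  unfold causalL
  split_ifs
  exacts [Bool.and_le_right _ _, Bool.and_le_left _ _]

lemma causalL_le_parr : causalL f g ≤ parr f g := by
  intro s
  unfold causalL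
  by_cases hs : s = theta (m + n)
  · simp [parr, star, hs]
  split_ifs with h
  · exact le_parr_of_sndStr_ne_theta fun h' => hs ((eq_theta_iff s).2 ⟨h, h'⟩)
  · exact le_parr_of_fstStr_ne_theta h

lemma tensor_le_causalR : tensor f g ≤ causalR f g := by
  intro s
  unfold causalR
  split_ifs
  exacts [Bool.and_le_left _ _, Bool.and_le_right _ _]

lemma causalR_le_parr : causalR f g ≤ parr f g := by
  intro s
  unfold causalR
  by_cases hs : s = theta (m + n)
  · simp [parr, star, hs]
  split_ifs with h
  · exact le_parr_of_fstStr_ne_theta fun h' => hs ((eq_theta_iff s).2 ⟨h', h⟩)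
  · exact le_parr_of_sndStr_ne_theta h

lemma tensor_le_parr : tensor f g ≤ parr f g :=
  tensor_le_causalL.trans causalL_le_parr

lemma setOf_eq_image_castAdd_union_image_natAdd (p : Fin (m + n) → Prop) :
    {k | p k} = Fin.castAdd n '' {i | p (Fin.castAdd n i)} ∪
      Fin.natAdd m '' {j | p (Fin.natAdd m j)} := by
  ext k
  have hne (i : Fin m) (j : Fin n) : Fin.castAdd n i ≠ Fin.natAdd m j := by
    simp only [ne_eq, Fin.ext_iff, Fin.val_castAdd, Fin.val_natAdd]
    omega
  refine Fin.addCases (fun i => ?_) (fun j => ?_) k <;> simp [hne, (hne _ _).symm]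

lemma tensor_eStr_castAdd (hg : g (theta n) = true) (i : Fin m) :
    tensor f g (eStr (Fin.castAdd n i)) = f (eStr i) := by
  simp [tensor, fstStr_eStr_castAdd, sndStr_eStr_castAdd, hg]

lemma tensor_eStr_natAdd (hf : f (theta m) = true) (j : Fin n) :
    tensor f g (eStr (Fin.natAdd m j)) = g (eStr j) := by
  simp [tensor, fstStr_eStr_natAdd, sndStr_eStr_natAdd, hf]

lemma parr_eStr_castAdd (i : Fin m) : parr f g (eStr (Fin.castAdd n i)) = f (eStr i) := by
  simp [parr, star, tensor, eStr_ne_theta, fstStr_eStr_castAdd, sndStr_eStr_castAdd]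

lemma parr_eStr_natAdd (j : Fin n) : parr f g (eStr (Fin.natAdd m j)) = g (eStr j) := by
  simp [parr, star, tensor, eStr_ne_theta, fstStr_eStr_natAdd, sndStr_eStr_natAdd]

theorem isSubtype_of_tensor_le_of_le_parr (hfs : IsSubtype f) (hgs : IsSubtype g)
    (hf : f (theta m) = true) (hg : g (theta n) = true) {h : Str (m + n) → Bool}
    (hlo : tensor f g ≤ h) (hhi : h ≤ parr f g) :
    IsSubtype h ∧
      Iset h = Fin.castAdd n '' Iset f ∪ Fin.natAdd m '' Iset g ∧
      Oset h = Fin.castAdd n '' Oset f ∪ Fin.natAdd m '' Oset g := by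
  have hcast (i : Fin m) : h (eStr (Fin.castAdd n i)) = f (eStr i) :=
    le_antisymm ((hhi _).trans_eq (parr_eStr_castAdd i))
      ((tensor_eStr_castAdd hg i).symm.trans_le (hlo _))
  have hnat (j : Fin n) : h (eStr (Fin.natAdd m j)) = g (eStr j) :=
    le_antisymm ((hhi _).trans_eq (parr_eStr_natAdd j))
      ((tensor_eStr_natAdd hf j).symm.trans_le (hlo _))
  have hI : Iset h = Fin.castAdd n '' Iset f ∪ Fin.natAdd m '' Iset g := by
    simp only [Iset, setOf_eq_image_castAdd_union_image_natAdd, hcast, hnat]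
  have hO : Oset h = Fin.castAdd n '' Oset f ∪ Fin.natAdd m '' Oset g := by
    simp only [Oset, setOf_eq_image_castAdd_union_image_natAdd, hcast, hnat]
  refine ⟨?_, hI, hO⟩
  rw [IsSubtype, hI, hO, pSet_castAdd_union_natAdd, pSet_castAdd_union_natAdd]
  refine ⟨(tensor_mono hfs.1 hgs.1).trans hlo, hhi.trans ?_⟩
  calc parr f g ≤ parr (star (pSet (Oset f))) (star (pSet (Oset g))) := parr_mono hfs.2 hgs.2
    _ = star (tensor (pSet (Oset f)) (pSet (Oset g))) := by
      rw [parr, star_star (pSet_theta _), star_star (pSet_theta _)]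

end Products

/-- closure of subtypes under complement, permutation and the products,
with the corresponding input/output sets. -/
theorem stmt6 {m n : ℕ} (f : Str m → Bool) (g : Str n → Bool)
    (hf : f ∈ Fcal m) (hg : g ∈ Fcal n)
    (hfs : IsSubtype f) (hgs : IsSubtype g) (σ : Equiv.Perm (Fin m)) :
    (IsSubtype (star f) ∧ Iset (star f) = Oset f ∧ Oset (star f) = Iset f) ∧
    (IsSubtype (permComp f σ) ∧ Iset (permComp f σ) = ⇑σ ⁻¹' Iset f ∧
      Oset (permComp f σ) = ⇑σ ⁻¹' Oset f) ∧
    (∀ h ∈ ({tensor f g, parr f g, causalL f g, causalR f g} :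
        Set (Str (m + n) → Bool)),
      IsSubtype h ∧
      Iset h = Fin.castAdd n '' Iset f ∪ Fin.natAdd m '' Iset g ∧
      Oset h = Fin.castAdd n '' Oset f ∪ Fin.natAdd m '' Oset g) := by
  refine ⟨⟨hfs.star, Iset_star f, Oset_star f⟩,
    ⟨hfs.permComp σ, Iset_permComp σ f, Oset_permComp σ f⟩, ?_⟩
  rintro h (rfl | rfl | rfl | rfl)
  · exact isSubtype_of_tensor_le_of_le_parr hfs hgs hf hg le_rfl tensor_le_parr
  · exact isSubtype_of_tensor_le_of_le_parr hfs hgs hf hg tensor_le_parr le_rfl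
  · exact isSubtype_of_tensor_le_of_le_parr hfs hgs hf hg tensor_le_causalL causalL_le_parr
  · exact isSubtype_of_tensor_le_of_le_parr hfs hgs hf hg tensor_le_causalR causalR_le_parr

end HOT
end

section
/- Fix O ⊆ [n] and let s ∈ {0,1}^n with s ∉ D_θ ∪ U_θ. Then there exist finitely many basic strings t¹, …, t^k (for ≤_O) such that f_s = f_{t¹} ∧ ⋯ ∧ f_{t^k}. -/
open Classical

namespace HOT

/-- Auxiliary basic string: `true` at `p.1` among `O`-coordinates, `true` on `Oᶜ`
except possibly at the coordinate recorded in `p.2`. -/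
noncomputable def bStr {n : ℕ} (O : Set (Fin n)) (p : Fin n × Option (Fin n)) : Str n :=
  fun l => if l ∈ O then decide (l = p.1) else decide (p.2 ≠ some l)

lemma le_false_iff' (a : Bool) : a ≤ false ↔ a = false := by cases a <;> simp

lemma leO_theta_iff {n : ℕ} (O : Set (Fin n)) (u : Str n) :
    leO O (theta n) u ↔ ∀ i, i ∉ O → u i = false := by
  constructor
  · intro h i hi
    have := (h i).2 hi
    simpa [theta, le_false_iff'] using this
  · intro h i
    refine ⟨fun _ => by simp [theta], fun hi => ?_⟩
    simp [theta, h i hi]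

lemma leO_iff {n : ℕ} (O : Set (Fin n)) (v u : Str n) :
    leO O v u ↔ (∀ j, j ∈ O → v j = true → u j = true) ∧
      (∀ i, i ∉ O → v i = false → u i = false) := by
  constructor
  · intro h
    refine ⟨fun j hj hv => ?_, fun i hi hv => ?_⟩
    · have := (h j).1 hj; rw [hv] at this; exact Bool.le_iff_imp.mp this rfl
    · have := (h i).2 hi; rw [hv] at this; exact (le_false_iff' _).mp this
  · intro ⟨hA, hB⟩ i
    constructor
    · intro hi
      cases hv : v i
      · simp
      · simp [hA i hi hv]
    · intro hi
      cases hv : v i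
      · simp [le_false_iff', hB i hi hv]
      · simp

lemma leO_bStr_iff {n : ℕ} (O : Set (Fin n)) (p : Fin n × Option (Fin n))
    (hp1 : p.1 ∈ O) (hp2 : ∀ i, p.2 = some i → i ∉ O) (u : Str n) :
    leO O (bStr O p) u ↔ (u p.1 = true ∧ ∀ i, p.2 = some i → u i = false) := by
  rw [leO_iff]
  constructor
  · intro ⟨hA, hB⟩
    refine ⟨hA p.1 hp1 (by simp [bStr, hp1]), fun i hi => ?_⟩
    have hiO := hp2 i hi
    exact hB i hiO (by simp [bStr, hiO, hi])
  · intro ⟨hA, hB⟩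
    constructor
    · intro j hj hv
      have : j = p.1 := by
        by_contra hne
        simp [bStr, hj, hne] at hv
      rw [this]; exact hA
    · intro i hiO hv
      have : p.2 = some i := by
        by_contra hne
        simp [bStr, hiO, hne] at hv
      exact hB i this

/-- for `s ∉ D_θ ∪ U_θ`, the function `f_s` is a finite meet of
functions `f_t` with `t` basic (for `≤_O`). -/
theorem stmt11 {n : ℕ} (O : Set (Fin n)) (s : Str n)
    (h1 : ¬ leO O s (theta n)) (h2 : ¬ leO O (theta n) s) :
    ∃ k : ℕ, 0 < k ∧ ∃ t : Fin k → Str n, (∀ i, IsBasic O (t i)) ∧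
      fStr O s = Finset.univ.inf (fun i => fStr O (t i)) := by
  classical
  obtain ⟨j0, hj0O, hj0⟩ : ∃ j, j ∈ O ∧ s j = true := by
    by_contra h
    push_neg at h
    apply h1
    rw [leO_iff]
    exact ⟨fun j hj hv => absurd hv (h j hj), fun i _ _ => rfl⟩
  obtain ⟨i0, hi0O, hi0⟩ : ∃ i, i ∉ O ∧ s i = true := by
    by_contra h
    push_neg at h
    exact h2 ((leO_theta_iff O s).mpr fun i hi => Bool.eq_false_iff.mpr (h i hi))
  set Jf : Finset (Fin n) := Finset.univ.filter (fun j => j ∈ O ∧ s j = true) with hJf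
  set Zf : Finset (Fin n) := Finset.univ.filter (fun i => i ∉ O ∧ s i = false) with hZf
  set Sf : Finset (Option (Fin n)) := if Zf.Nonempty then Zf.image some else {none} with hSf
  set F : Finset (Fin n × Option (Fin n)) := Jf ×ˢ Sf with hF
  have hmemF : ∀ p ∈ F, p.1 ∈ O ∧ s p.1 = true ∧
      ∀ i, p.2 = some i → (i ∉ O ∧ s i = false) := by
    intro p hp
    obtain ⟨hp1, hp2⟩ := Finset.mem_product.mp hp
    have hJ : p.1 ∈ O ∧ s p.1 = true := by simpa [hJf] using hp1
    refine ⟨hJ.1, hJ.2, ?_⟩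
    intro i hi
    by_cases hZ : Zf.Nonempty
    · rw [hSf] at hp2
      rw [if_pos hZ] at hp2
      obtain ⟨z, hz, hzz⟩ := Finset.mem_image.mp hp2
      rw [← hzz] at hi
      injection hi with hzi
      rw [hzi] at hz
      simpa [hZf] using hz
    · rw [hSf] at hp2
      rw [if_neg hZ] at hp2
      simp at hp2
      rw [hp2] at hi
      exact absurd hi (by simp)
  have hne_some_i0 : ∀ p ∈ F, p.2 ≠ some i0 := by
    intro p hp hc
    have := ((hmemF p hp).2.2 i0 hc).2
    rw [hi0] at this
    exact absurd this (by simp)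
  have hbasic : ∀ p ∈ F, IsBasic O (bStr O p) := by
    intro p hp
    obtain ⟨hpO, hps, hpZ⟩ := hmemF p hp
    refine ⟨?_, ?_, ?_, ?_⟩
    · intro hc
      have := ((leO_iff O _ _).mp hc).1 p.1 hpO (by simp [bStr, hpO])
      simp [theta] at this
    · intro hc
      have := ((leO_theta_iff O _).mp hc) i0 hi0O
      simp [bStr, hi0O, hne_some_i0 p hp] at this
    · refine ⟨p.1, ⟨hpO, by simp [bStr, hpO]⟩, ?_⟩
      intro y ⟨hyO, hy⟩
      simpa [bStr, hyO] using hy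
    · intro i i' hi hi' hfi hfi'
      rw [Set.mem_compl_iff] at hi hi'
      simp [bStr, hi] at hfi
      simp [bStr, hi'] at hfi'
      rw [hfi'] at hfi
      injection hfi with h
      exact h.symm
  have hSfne : Sf.Nonempty := by
    rw [hSf]
    by_cases hZ : Zf.Nonempty
    · rw [if_pos hZ]
      exact hZ.image some
    · rw [if_neg hZ]
      exact ⟨none, Finset.mem_singleton_self none⟩
  have hj0J : j0 ∈ Jf := by simp [hJf, hj0O, hj0]
  have hFne : F.Nonempty := by
    obtain ⟨o, ho⟩ := hSfne
    exact ⟨(j0, o), Finset.mem_product.mpr ⟨hj0J, ho⟩⟩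
  have hchar : ∀ u : Str n, (leO O s u ∨ leO O (theta n) u) ↔
      ∀ p ∈ F, (leO O (bStr O p) u ∨ leO O (theta n) u) := by
    intro u
    constructor
    · rintro (h | h) p hp
      · obtain ⟨hpO, hps, hpZ⟩ := hmemF p hp
        left
        rw [leO_bStr_iff O p hpO (fun i hi => (hpZ i hi).1) u]
        obtain ⟨hA, hB⟩ := (leO_iff O s u).mp h
        exact ⟨hA p.1 hpO hps, fun i hi => hB i (hpZ i hi).1 (hpZ i hi).2⟩
      · exact Or.inr h
    · intro h
      by_cases hth : leO O (theta n) u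
      · exact Or.inr hth
      · left
        rw [leO_iff]
        constructor
        · intro j hj hsj
          have hjJ : j ∈ Jf := by simp [hJf, hj, hsj]
          obtain ⟨o, ho⟩ := hSfne
          have hpF : (j, o) ∈ F := Finset.mem_product.mpr ⟨hjJ, ho⟩
          rcases h _ hpF with hb | hth'
          · obtain ⟨hpO, hps, hpZ⟩ := hmemF _ hpF
            exact ((leO_bStr_iff O (j, o) hpO (fun i hi => (hpZ i hi).1) u).mp hb).1
          · exact absurd hth' hth
        · intro i hi hsi
          have hiZ : i ∈ Zf := by simp [hZf, hi, hsi]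
          have hZne : Zf.Nonempty := ⟨i, hiZ⟩
          have hsome : some i ∈ Sf := by
            rw [hSf, if_pos hZne]
            exact Finset.mem_image_of_mem some hiZ
          have hpF : (j0, some i) ∈ F := Finset.mem_product.mpr ⟨hj0J, hsome⟩
          rcases h _ hpF with hb | hth'
          · obtain ⟨hpO, hps, hpZ⟩ := hmemF _ hpF
            exact ((leO_bStr_iff O (j0, some i) hpO
              (fun i' hi' => (hpZ i' hi').1) u).mp hb).2 i rfl
          · exact absurd hth' hth
  refine ⟨F.card, Finset.card_pos.mpr hFne,
    fun i => bStr O ((F.equivFin.symm i : {x // x ∈ F}) : Fin n × Option (Fin n)),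
    fun i => hbasic _ (F.equivFin.symm i).2, ?_⟩
  funext u
  rw [Finset.inf_apply]
  have heq : fStr O s u = true ↔
      (Finset.univ.inf fun i => fStr O
        (bStr O ((F.equivFin.symm i : {x // x ∈ F}) : Fin n × Option (Fin n))) u) = true := by
    constructor
    · intro hL
      have hdisj := of_decide_eq_true hL
      have hall := (hchar u).mp hdisj
      apply (Finset.inf_eq_top_iff _ _).mpr
      intro i _
      exact decide_eq_true (hall _ (F.equivFin.symm i).2)
    · intro hR
      have hall := (Finset.inf_eq_top_iff _ _).mp hR
      apply decide_eq_true
      apply (hchar u).mpr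
      intro p hp
      have := hall (F.equivFin ⟨p, hp⟩) (Finset.mem_univ _)
      rw [Equiv.symm_apply_apply] at this
      exact of_decide_eq_true this
  cases hL : fStr O s u
  · cases hR : (Finset.univ.inf fun i => fStr O
        (bStr O ((F.equivFin.symm i : {x // x ∈ F}) : Fin n × Option (Fin n))) u)
    · rfl
    · exact absurd (heq.mpr hR) (by rw [hL]; simp)
  · exact (heq.mp hL).symm

end HOT
end

section
/- Let f be a type function and let S, T ∈ 𝓟_f^0 be incomparable (neither S ⊆ T nor T ⊆ S). Then S^↓ ∩ T^↓ is either empty or a chain, and S^↑ ∩ T^↑ is either empty or a chain. -/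
open Classical

namespace HOT

/-!
Call a family of sets good if, for any two incomparable members, the members below both of them
form a chain. We show that `𝓟_f^0` is good by induction on the type function `f`; the statement
about common upper bounds then follows formally.

Complementation negates `f̂_T` for `T ≠ ∅, [n]` (the signs `(-1)^{|s ∩ T|}` sum to zero, and the
correction at `θ` has weight zero), so it does not change the label sets, and `𝓟_{f*}^0` differs
from `𝓟_f^0` at most by `∅` and `[n]`, which are comparable with everything. Permutations transport
the whole structure. For a tensor product the Möbius transform factorises, so
`𝓟_{f⊗g} ≅ 𝓟_f × 𝓟_g`, and a label of `U` in one block forces the component of `U` in the other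
block to be minimal. Common lower bounds of an incomparable pair in `𝓟_{f⊗g}^0` therefore agree
with the pair in a minimal component and are compared in the other one, where the induction
hypothesis applies.
-/

section Order

variable {α β : Type*}

def LowerBoundsChain [Preorder α] (P : Set α) : Prop :=
  ∀ S ∈ P, ∀ T ∈ P, ¬ S ≤ T → ¬ T ≤ S → IsChain (· ≤ ·) {X ∈ P | X ≤ S ∧ X ≤ T}

namespace LowerBoundsChain

theorem of_total [Preorder α] (P : Set α) (h : ∀ a b : α, a ≤ b ∨ b ≤ a) :
    LowerBoundsChain P :=
  fun S _ T _ hST hTS => ((h S T).elim hST hTS).elim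

theorem mono [Preorder α] {P Q : Set α} (h : LowerBoundsChain P) (hQP : Q ⊆ P) :
    LowerBoundsChain Q := fun S hS T hT hST hTS =>
  (h S (hQP hS) T (hQP hT) hST hTS).mono fun _ hX => Set.mem_sep (hQP hX.1) hX.2

theorem preimage [Preorder α] [Preorder β] {P : Set β} (h : LowerBoundsChain P) (e : α ↪o β) :
    LowerBoundsChain (e ⁻¹' P) := by
  intro S hS T hT hST hTS X hX Y hY hXY
  simpa using h (e S) hS (e T) hT (by simpa using hST) (by simpa using hTS)
    (Set.mem_sep hX.1 (by simpa using hX.2)) (Set.mem_sep hY.1 (by simpa using hY.2))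
    (e.injective.ne hXY)

/-- `⊥` and `⊤` are comparable with everything, so adding them to a family changes nothing. -/
theorem of_ne_bot_top [PartialOrder α] [BoundedOrder α] {P Q : Set α} (h : LowerBoundsChain P)
    (hQP : ∀ X ∈ Q, X ≠ ⊥ → X ≠ ⊤ → X ∈ P) : LowerBoundsChain Q := by
  intro S hS T hT hST hTS X hX Y hY _
  have hS0 : S ≠ ⊥ := by rintro rfl; exact hST bot_le
  have hT0 : T ≠ ⊥ := by rintro rfl; exact hTS bot_le
  have hS1 : S ≠ ⊤ := by rintro rfl; exact hTS le_top
  have hT1 : T ≠ ⊤ := by rintro rfl; exact hST le_top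
  rcases eq_or_ne X ⊥ with rfl | hX0
  · exact Or.inl bot_le
  rcases eq_or_ne Y ⊥ with rfl | hY0
  · exact Or.inr bot_le
  have hX1 : X ≠ ⊤ := by rintro rfl; exact hS1 (top_le_iff.1 hX.2.1)
  have hY1 : Y ≠ ⊤ := by rintro rfl; exact hS1 (top_le_iff.1 hY.2.1)
  exact (h S (hQP S hS hS0 hS1) T (hQP T hT hT0 hT1) hST hTS).total
    (Set.mem_sep (hQP X hX.1 hX0 hX1) hX.2) (Set.mem_sep (hQP Y hY.1 hY0 hY1) hY.2)

/-- In a product family where every member has a minimal coordinate, two common lower bounds of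
an incomparable pair share that coordinate with it, so they are compared in the other one. -/
theorem prod [PartialOrder α] [PartialOrder β] {A : Set α} {B : Set β}
    (hA : LowerBoundsChain A) (hB : LowerBoundsChain B) :
    LowerBoundsChain {p : α × β | p.1 ∈ A ∧ p.2 ∈ B ∧
      (Minimal (· ∈ A) p.1 ∨ Minimal (· ∈ B) p.2)} := by
  intro S hS T hT hST hTS X hX Y hY _
  obtain ⟨⟨hX1, hX2, -⟩, hXS, hXT⟩ := hX
  obtain ⟨⟨hY1, hY2, -⟩, hYS, hYT⟩ := hY
  rcases hS.2.2 with hSmin | hSmin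
  · have hXY : X.1 = Y.1 := (hSmin.eq_of_le hX1 hXS.1).trans (hSmin.eq_of_le hY1 hYS.1).symm
    suffices X.2 ≤ Y.2 ∨ Y.2 ≤ X.2 by
      simpa [Prod.le_def, hXY] using this
    rcases hT.2.2 with hTmin | hTmin
    · have hST1 : S.1 = T.1 :=
        (hSmin.eq_of_le hX1 hXS.1).symm.trans (hTmin.eq_of_le hX1 hXT.1)
      refine (hB S.2 hS.2.1 T.2 hT.2.1 ?_ ?_).total
        (Set.mem_sep hX2 ⟨hXS.2, hXT.2⟩) (Set.mem_sep hY2 ⟨hYS.2, hYT.2⟩)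
      · exact fun h => hST ⟨hST1.le, h⟩
      · exact fun h => hTS ⟨hST1.ge, h⟩
    · exact Or.inl ((hTmin.eq_of_le hX2 hXT.2).trans (hTmin.eq_of_le hY2 hYT.2).symm).le
  · have hXY : X.2 = Y.2 := (hSmin.eq_of_le hX2 hXS.2).trans (hSmin.eq_of_le hY2 hYS.2).symm
    suffices X.1 ≤ Y.1 ∨ Y.1 ≤ X.1 by
      simpa [Prod.le_def, hXY] using this
    rcases hT.2.2 with hTmin | hTmin
    · exact Or.inl ((hTmin.eq_of_le hX1 hXT.1).trans (hTmin.eq_of_le hY1 hYT.1).symm).le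
    · have hST2 : S.2 = T.2 :=
        (hSmin.eq_of_le hX2 hXS.2).symm.trans (hTmin.eq_of_le hX2 hXT.2)
      refine (hA S.1 hS.1 T.1 hT.1 ?_ ?_).total
        (Set.mem_sep hX1 ⟨hXS.1, hXT.1⟩) (Set.mem_sep hY1 ⟨hYS.1, hYT.1⟩)
      · exact fun h => hST ⟨h, hST2.le⟩
      · exact fun h => hTS ⟨h, hST2.ge⟩

/-- Two incomparable members with two incomparable common upper bounds would themselves be
incomparable common lower bounds of those. -/
theorem isChain_upperBounds [Preorder α] {P : Set α} (h : LowerBoundsChain P) {S T : α}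
    (hS : S ∈ P) (hT : T ∈ P) (hST : ¬ S ≤ T) (hTS : ¬ T ≤ S) :
    IsChain (· ≤ ·) {X ∈ P | S ≤ X ∧ T ≤ X} := by
  intro X hX Y hY _
  by_contra hXY
  rcases (h X hX.1 Y hY.1 (not_or.1 hXY).1 (not_or.1 hXY).2).total
    (Set.mem_sep hS ⟨hX.2.1, hY.2.1⟩) (Set.mem_sep hT ⟨hX.2.2, hY.2.2⟩) with h | h
  · exact hST h
  · exact hTS h

end LowerBoundsChain

end Order

section Mobius

variable {m n : ℕ}

/-- `f̂_T = Σ_s Π_j w_T(j, s_j) f(s)`: the weight `b` off `T` encodes the restriction of the sum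
to strings that are `1` outside `T`. -/
noncomputable def mobiusWeight (T : Set (Fin n)) (j : Fin n) (b : Bool) : ℤ :=
  if j ∈ T then (-1) ^ b.toNat else b.toNat

theorem mobius_eq_sum_prod (f : Str n → Bool) (T : Set (Fin n)) :
    mobius f T = ∑ s : Str n, (∏ j, mobiusWeight T j (s j)) * toZ (f s) := by
  refine Finset.sum_congr rfl fun s _ => ?_
  split_ifs with hs
  · congr 1
    rw [← Finset.prod_pow_eq_pow_sum]
    refine Finset.prod_congr rfl fun j _ => ?_
    by_cases hj : j ∈ T
    · simp [mobiusWeight, hj]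
    · simp [mobiusWeight, hj, hs j hj]
  · obtain ⟨j, hj, hsj⟩ : ∃ j, j ∉ T ∧ s j = false := by simpa using hs
    rw [Finset.prod_eq_zero (Finset.mem_univ j) (by simp [mobiusWeight, hj, hsj]), zero_mul]

theorem sum_prod_mobiusWeight_eq_zero {T : Set (Fin n)} (hT : T.Nonempty) :
    ∑ s : Str n, ∏ j, mobiusWeight T j (s j) = 0 := by
  obtain ⟨j, hj⟩ := hT
  rw [← Fintype.prod_sum]
  exact Finset.prod_eq_zero (Finset.mem_univ j) (by simp [mobiusWeight, hj])

theorem prod_mobiusWeight_theta_eq_zero {T : Set (Fin n)} (hT : T ≠ Set.univ) :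
    ∏ j, mobiusWeight T j (theta n j) = 0 := by
  obtain ⟨j, hj⟩ := (Set.ne_univ_iff_exists_notMem T).1 hT
  exact Finset.prod_eq_zero (Finset.mem_univ j) (by simp [mobiusWeight, theta, hj])

theorem mobius_star (f : Str n → Bool) {T : Set (Fin n)} (hT₀ : T.Nonempty)
    (hT₁ : T ≠ Set.univ) : mobius (star f) T = -mobius f T := by
  have hterm : ∀ s : Str n, (∏ j, mobiusWeight T j (s j)) * toZ (star f s) =
      (∏ j, mobiusWeight T j (s j)) - (∏ j, mobiusWeight T j (s j)) * toZ (f s) := by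
    intro s
    by_cases hs : s = theta n
    · subst hs
      simp [prod_mobiusWeight_theta_eq_zero hT₁]
    · simp only [star, if_neg hs]
      cases f s <;> simp [toZ]
  simp only [mobius_eq_sum_prod, hterm, Finset.sum_sub_distrib,
    sum_prod_mobiusWeight_eq_zero hT₀, zero_sub]

theorem mobius_permComp (f : Str n → Bool) (σ : Equiv.Perm (Fin n)) (T : Set (Fin n)) :
    mobius (permComp f σ) T = mobius f (σ '' T) := by
  rw [mobius_eq_sum_prod, mobius_eq_sum_prod]
  refine Fintype.sum_equiv (Equiv.arrowCongr σ (Equiv.refl Bool)) _ _ fun s => ?_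
  congr 1
  conv_rhs => rw [← Equiv.prod_comp σ]
  simp [mobiusWeight, Equiv.arrowCongr]

def fstSet (U : Set (Fin (m + n))) : Set (Fin m) := Fin.castAdd n ⁻¹' U

def sndSet (U : Set (Fin (m + n))) : Set (Fin n) := Fin.natAdd m ⁻¹' U

theorem fstStr_append (s : Str m) (t : Str n) : fstStr (Fin.append s t) = s :=
  funext (Fin.append_left s t)

theorem sndStr_append (s : Str m) (t : Str n) : sndStr (Fin.append s t) = t :=
  funext (Fin.append_right s t)

theorem mobius_tensor (f : Str m → Bool) (g : Str n → Bool) (U : Set (Fin (m + n))) :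
    mobius (tensor f g) U = mobius f (fstSet U) * mobius g (sndSet U) := by
  simp only [mobius_eq_sum_prod, Finset.sum_mul_sum, ← Fintype.sum_prod_type']
  refine (Fintype.sum_equiv (Fin.appendEquiv m n) _ _ fun p => ?_).symm
  have htensor : toZ (tensor f g (Fin.appendEquiv m n p)) = toZ (f p.1) * toZ (g p.2) := by
    simp only [tensor, Fin.appendEquiv, Equiv.coe_fn_mk, fstStr_append, sndStr_append]
    cases f p.1 <;> cases g p.2 <;> rfl
  have hfst : ∀ i, mobiusWeight U (Fin.castAdd n i) = mobiusWeight (fstSet U) i := fun _ => rfl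
  have hsnd : ∀ j, mobiusWeight U (Fin.natAdd m j) = mobiusWeight (sndSet U) j := fun _ => rfl
  simp only [Fin.appendEquiv_apply, Fin.prod_univ_add, Fin.append_left, Fin.append_right,
    hfst, hsnd, htensor]
  ring

end Mobius

section ReducedPoset

variable {n : ℕ}

theorem mem_labels_iff {f : Str n → Bool} {T : Set (Fin n)} {x : Fin n} :
    x ∈ labels f T ↔ x ∈ T ∧ ∀ V ∈ structPoset f, V ⊆ T → x ∈ V → V = T := by
  simp only [labels, Set.mem_sdiff, Set.mem_sUnion, Set.mem_ofPred_eq, not_exists, not_and,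
    Set.ssubset_iff_subset_ne]
  refine and_congr_right fun _ => forall_congr' fun V => ?_
  tauto

theorem mem_reducedPoset_of_mem_labels {f : Str n → Bool} {T : Set (Fin n)} {x : Fin n}
    (hT : T ∈ structPoset f) (hx : x ∈ labels f T) : T ∈ reducedPoset f :=
  ⟨hT, Or.inr (Set.nonempty_of_mem hx).ne_empty⟩

theorem mem_reducedPoset_of_minimal {f : Str n → Bool} {T : Set (Fin n)}
    (h : Minimal (· ∈ structPoset f) T) : T ∈ reducedPoset f := by
  rcases T.eq_empty_or_nonempty with rfl | ⟨x, hx⟩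
  · exact ⟨h.prop, Or.inl rfl⟩
  · exact mem_reducedPoset_of_mem_labels h.prop
      (mem_labels_iff.2 ⟨hx, fun V hV hVT _ => h.eq_of_le hV hVT⟩)

theorem mem_structPoset_star (f : Str n → Bool) {T : Set (Fin n)} (hT₀ : T.Nonempty)
    (hT₁ : T ≠ Set.univ) : T ∈ structPoset (star f) ↔ T ∈ structPoset f := by
  simp [structPoset, mobius_star f hT₀ hT₁]

theorem labels_star (f : Str n → Bool) (T : Set (Fin n)) : labels (star f) T = labels f T := by
  ext x
  simp only [mem_labels_iff]
  refine and_congr_right fun _ => forall_congr' fun V => ?_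
  rcases eq_or_ne V Set.univ with rfl | hV
  · simp [eq_comm]
  · constructor
    · exact fun h hVP hVT hxV => h ((mem_structPoset_star f ⟨x, hxV⟩ hV).2 hVP) hVT hxV
    · exact fun h hVP hVT hxV => h ((mem_structPoset_star f ⟨x, hxV⟩ hV).1 hVP) hVT hxV

theorem mem_reducedPoset_of_star {f : Str n → Bool} {T : Set (Fin n)}
    (hT : T ∈ reducedPoset (star f)) (hT₀ : T ≠ ∅) (hT₁ : T ≠ Set.univ) :
    T ∈ reducedPoset f :=
  ⟨(mem_structPoset_star f (Set.nonempty_iff_ne_empty.2 hT₀) hT₁).1 hT.1,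
    labels_star f T ▸ hT.2⟩

theorem mem_structPoset_permComp {f : Str n → Bool} {σ : Equiv.Perm (Fin n)}
    {T : Set (Fin n)} : T ∈ structPoset (permComp f σ) ↔ σ '' T ∈ structPoset f := by
  simp [structPoset, mobius_permComp]

theorem image_mem_reducedPoset_of_permComp {f : Str n → Bool} {σ : Equiv.Perm (Fin n)}
    {T : Set (Fin n)} (hT : T ∈ reducedPoset (permComp f σ)) : σ '' T ∈ reducedPoset f := by
  obtain ⟨hTP, rfl | hL⟩ := hT
  · exact ⟨mem_structPoset_permComp.1 hTP, Or.inl (Set.image_empty _)⟩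
  obtain ⟨x, hx⟩ := Set.nonempty_iff_ne_empty.2 hL
  obtain ⟨hxT, hxmin⟩ := mem_labels_iff.1 hx
  refine mem_reducedPoset_of_mem_labels (mem_structPoset_permComp.1 hTP)
    (mem_labels_iff.2 ⟨Set.mem_image_of_mem σ hxT, fun W hW hWT hxW => ?_⟩)
  have hpre : σ ⁻¹' W = T := hxmin (σ ⁻¹' W)
    (mem_structPoset_permComp.2 (by rwa [Equiv.image_preimage]))
    (by rwa [← Equiv.image_subset, Equiv.image_preimage]) hxW
  rw [← hpre, Equiv.image_preimage]

end ReducedPoset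

section Tensor

variable {m n : ℕ}

def splitSet : Set (Fin (m + n)) ≃o Set (Fin m) × Set (Fin n) where
  toFun U := (fstSet U, sndSet U)
  invFun p := {x | Fin.addCases (motive := fun _ => Prop) (· ∈ p.1) (· ∈ p.2) x}
  left_inv U := by
    ext x
    induction x using Fin.addCases <;> simp [fstSet, sndSet]
  right_inv p := by ext <;> simp [fstSet, sndSet]
  map_rel_iff' {U V} := by
    simp only [Equiv.coe_fn_mk, Prod.mk_le_mk, Set.subset_def, fstSet, sndSet, Set.mem_preimage]
    exact (Fin.forall_fin_add fun x => x ∈ U → x ∈ V).symm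

@[simp]
theorem splitSet_apply (U : Set (Fin (m + n))) : splitSet U = (fstSet U, sndSet U) := rfl

@[simp]
theorem fstSet_splitSet_symm (p : Set (Fin m) × Set (Fin n)) : fstSet (splitSet.symm p) = p.1 :=
  congrArg Prod.fst (splitSet.apply_symm_apply p)

@[simp]
theorem sndSet_splitSet_symm (p : Set (Fin m) × Set (Fin n)) : sndSet (splitSet.symm p) = p.2 :=
  congrArg Prod.snd (splitSet.apply_symm_apply p)

@[simp]
theorem castAdd_mem_splitSet_symm (p : Set (Fin m) × Set (Fin n)) (i : Fin m) :
    Fin.castAdd n i ∈ splitSet.symm p ↔ i ∈ p.1 := by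
  simp [splitSet]

@[simp]
theorem natAdd_mem_splitSet_symm (p : Set (Fin m) × Set (Fin n)) (j : Fin n) :
    Fin.natAdd m j ∈ splitSet.symm p ↔ j ∈ p.2 := by
  simp [splitSet]

variable {f : Str m → Bool} {g : Str n → Bool} {U : Set (Fin (m + n))}

theorem mem_structPoset_tensor :
    U ∈ structPoset (tensor f g) ↔ fstSet U ∈ structPoset f ∧ sndSet U ∈ structPoset g := by
  simp [structPoset, mobius_tensor]

theorem eq_splitSet_of_mem_labels_tensor {x : Fin (m + n)}
    (hx : x ∈ labels (tensor f g) U) {p : Set (Fin m) × Set (Fin n)}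
    (hp₁ : p.1 ∈ structPoset f) (hp₂ : p.2 ∈ structPoset g) (hpU : p ≤ splitSet U)
    (hxp : x ∈ splitSet.symm p) : p = splitSet U :=
  splitSet.symm_apply_eq.1 <| (mem_labels_iff.1 hx).2 _
    (mem_structPoset_tensor.2 (by simpa using And.intro hp₁ hp₂))
    (splitSet.symm_apply_le.2 hpU) hxp

theorem mem_labels_fstSet_of_castAdd (hU : U ∈ structPoset (tensor f g)) {i : Fin m}
    (hi : Fin.castAdd n i ∈ labels (tensor f g) U) :
    i ∈ labels f (fstSet U) ∧ Minimal (· ∈ structPoset g) (sndSet U) := by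
  obtain ⟨hU₁, hU₂⟩ := mem_structPoset_tensor.1 hU
  refine ⟨mem_labels_iff.2 ⟨(mem_labels_iff.1 hi).1, fun W hW hWU hiW => ?_⟩,
    ⟨hU₂, fun Z hZ hZU => ?_⟩⟩
  · exact congrArg Prod.fst
      (eq_splitSet_of_mem_labels_tensor hi (p := (W, sndSet U)) hW hU₂ ⟨hWU, le_rfl⟩ (by simpa))
  · exact (congrArg Prod.snd
      (eq_splitSet_of_mem_labels_tensor hi (p := (fstSet U, Z)) hU₁ hZ ⟨le_rfl, hZU⟩
        ((castAdd_mem_splitSet_symm _ _).2 (mem_labels_iff.1 hi).1))).ge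

theorem mem_labels_sndSet_of_natAdd (hU : U ∈ structPoset (tensor f g)) {j : Fin n}
    (hj : Fin.natAdd m j ∈ labels (tensor f g) U) :
    j ∈ labels g (sndSet U) ∧ Minimal (· ∈ structPoset f) (fstSet U) := by
  obtain ⟨hU₁, hU₂⟩ := mem_structPoset_tensor.1 hU
  refine ⟨mem_labels_iff.2 ⟨(mem_labels_iff.1 hj).1, fun W hW hWU hjW => ?_⟩,
    ⟨hU₁, fun Z hZ hZU => ?_⟩⟩
  · exact congrArg Prod.snd
      (eq_splitSet_of_mem_labels_tensor hj (p := (fstSet U, W)) hU₁ hW ⟨le_rfl, hWU⟩ (by simpa))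
  · exact (congrArg Prod.fst
      (eq_splitSet_of_mem_labels_tensor hj (p := (Z, sndSet U)) hZ hU₂ ⟨hZU, le_rfl⟩
        ((natAdd_mem_splitSet_symm _ _).2 (mem_labels_iff.1 hj).1))).ge

theorem splitSet_mem_of_mem_reducedPoset_tensor (hU : U ∈ reducedPoset (tensor f g)) :
    splitSet U ∈ {p : Set (Fin m) × Set (Fin n) | p.1 ∈ reducedPoset f ∧ p.2 ∈ reducedPoset g ∧
      (Minimal (· ∈ reducedPoset f) p.1 ∨ Minimal (· ∈ reducedPoset g) p.2)} := by
  obtain ⟨hUP, rfl | hL⟩ := hU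
  · obtain ⟨h₁, h₂⟩ := mem_structPoset_tensor.1 hUP
    have h₀ : (∅ : Set (Fin m)) ∈ reducedPoset f := ⟨h₁, Or.inl rfl⟩
    exact ⟨h₀, ⟨h₂, Or.inl rfl⟩, Or.inl ⟨h₀, fun _ _ _ => Set.empty_subset _⟩⟩
  obtain ⟨x, hx⟩ := Set.nonempty_iff_ne_empty.2 hL
  induction x using Fin.addCases with
  | left i =>
    obtain ⟨hi, hmin⟩ := mem_labels_fstSet_of_castAdd hUP hx
    exact ⟨mem_reducedPoset_of_mem_labels (mem_structPoset_tensor.1 hUP).1 hi,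
      mem_reducedPoset_of_minimal hmin,
      Or.inr (hmin.mono (fun _ hX => hX.1) (mem_reducedPoset_of_minimal hmin))⟩
  | right j =>
    obtain ⟨hj, hmin⟩ := mem_labels_sndSet_of_natAdd hUP hx
    exact ⟨mem_reducedPoset_of_minimal hmin,
      mem_reducedPoset_of_mem_labels (mem_structPoset_tensor.1 hUP).2 hj,
      Or.inl (hmin.mono (fun _ hX => hX.1) (mem_reducedPoset_of_minimal hmin))⟩

end Tensor

theorem subset_total_of_subsingleton {ι : Type*} [Subsingleton ι] (A B : Set ι) :
    A ⊆ B ∨ B ⊆ A := by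
  rcases A.eq_empty_or_nonempty with rfl | ⟨x, hx⟩
  · exact Or.inl (Set.empty_subset B)
  · exact Or.inr fun y _ => Subsingleton.elim x y ▸ hx

theorem lowerBoundsChain_reducedPoset {n : ℕ} {f : Str n → Bool} (hf : IsType n f) :
    LowerBoundsChain (reducedPoset f) := by
  induction hf with
  | one => exact .of_total _ subset_total_of_subsingleton
  | dual _ ih => exact ih.of_ne_bot_top fun T hT h₀ h₁ => mem_reducedPoset_of_star hT h₀ h₁
  | perm σ _ ih =>
    exact (ih.preimage (OrderEmbedding.ofMapLEIff (σ '' ·)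
      fun _ _ => Set.image_subset_image_iff σ.injective)).mono
      fun _ hT => image_mem_reducedPoset_of_permComp hT
  | tens _ _ ihf ihg =>
    exact ((ihf.prod ihg).preimage splitSet.toOrderEmbedding).mono
      fun _ hU => splitSet_mem_of_mem_reducedPoset_tensor hU

/-- for incomparable `S, T ∈ 𝓟_f^0` of a type function `f`, both
`S^↓ ∩ T^↓` and `S^↑ ∩ T^↑` are empty or chains. -/
theorem stmt16 {n : ℕ} (f : Str n → Bool) (hf : IsType n f)
    (S T : Set (Fin n)) (hS : S ∈ reducedPoset f) (hT : T ∈ reducedPoset f)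
    (hST : ¬ S ⊆ T) (hTS : ¬ T ⊆ S) :
    (downSet f S ∩ downSet f T = ∅ ∨ IsChain (· ⊆ ·) (downSet f S ∩ downSet f T)) ∧
    (upSet f S ∩ upSet f T = ∅ ∨ IsChain (· ⊆ ·) (upSet f S ∩ upSet f T)) := by
  have hP := lowerBoundsChain_reducedPoset hf
  have hdown : downSet f S ∩ downSet f T = {X ∈ reducedPoset f | X ≤ S ∧ X ≤ T} := by
    ext X; simp only [downSet, Set.mem_inter_iff, Set.mem_ofPred_eq]; tauto
  have hup : upSet f S ∩ upSet f T = {X ∈ reducedPoset f | S ≤ X ∧ T ≤ X} := by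
    ext X; simp only [upSet, Set.mem_inter_iff, Set.mem_ofPred_eq]; tauto
  rw [hdown, hup]
  exact ⟨Or.inr (hP S hS T hT hST hTS), Or.inr (hP.isChain_upperBounds hS hT hST hTS)⟩

end HOT
end
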